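/- If (G, p) in ℝ^d is the image under an affine map of a super stable framework (G, p') in ℝ^D, then (G, p) is universally rigid. -/

import Mathlib

/-- The stress matrix of a stress `ω`: off-diagonal entries `−ω i j`, diagonal entries
`∑ j, ω i j`. -/
def stressMatrix {n : ℕ} (ω : Fin n → Fin n → ℝ) : Matrix (Fin n) (Fin n) ℝ :=
  Matrix.of fun i j => if i = j then ∑ k, ω i k else -ω i j

/-- Frameworks are equivalent: same edge lengths. -/
def FrameworkEquiv {V : Type*} {d D : ℕ} (G : SimpleGraph V)
    (p : V → EuclideanSpace ℝ (Fin d)) (q : V → EuclideanSpace ℝ (Fin D)) : Prop :=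
  ∀ i j, G.Adj i j → dist (p i) (p j) = dist (q i) (q j)

/-- Frameworks are congruent: same distances for all pairs of vertices. -/
def FrameworkCongruent {V : Type*} {d D : ℕ}
    (p : V → EuclideanSpace ℝ (Fin d)) (q : V → EuclideanSpace ℝ (Fin D)) : Prop :=
  ∀ i j, dist (p i) (p j) = dist (q i) (q j)

/-- Universal rigidity of `(G, p)` in `ℝ^d`: every equivalent framework in any `ℝ^D`, `D ≥ d`,
is congruent to `(G, p)`. -/
def UniversallyRigid {V : Type*} {d : ℕ} (G : SimpleGraph V)
    (p : V → EuclideanSpace ℝ (Fin d)) : Prop :=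
  ∀ D : ℕ, d ≤ D → ∀ q : V → EuclideanSpace ℝ (Fin D),
    FrameworkEquiv G p q → FrameworkCongruent p q

/-- The edge directions of `(G, p)` lie on a conic at infinity if there is a nonzero symmetric
matrix `Q` with `(p i − p j)ᵀ Q (p i − p j) = 0` for all edges `ij`. -/
def OnConicAtInfinity {n D : ℕ} (G : SimpleGraph (Fin n))
    (p : Fin n → EuclideanSpace ℝ (Fin D)) : Prop :=
  ∃ Q : Matrix (Fin D) (Fin D) ℝ, Q ≠ 0 ∧ Q.IsSymm ∧ ∀ i j, G.Adj i j →
    dotProduct (fun k => p i k - p j k)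
      (Matrix.mulVec Q (fun k => p i k - p j k)) = 0

/-- `(G, p)` is super stable in `ℝ^D`: it has an equilibrium stress whose stress matrix is
positive semidefinite of rank `n − D − 1`, and its edge directions do not lie on a conic at
infinity. -/
def SuperStable {n D : ℕ} (G : SimpleGraph (Fin n))
    (p : Fin n → EuclideanSpace ℝ (Fin D)) : Prop :=
  (∃ ω : Fin n → Fin n → ℝ, (∀ i j, ω i j = ω j i) ∧ (∀ i j, ¬ G.Adj i j → ω i j = 0) ∧
    (∀ i, ∑ j, ω i j • (p i - p j) = 0) ∧
    (stressMatrix ω).PosSemidef ∧ (stressMatrix ω).rank = n - D - 1) ∧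
  ¬ OnConicAtInfinity G p

/-!
An equilibrium stress `ω` of `p'` is one of every affine image `A ∘ p'`. With
`Ω = stressMatrix ω`, the energy `∑ ω i j * ‖r i - r j‖²` of a configuration `r` equals
`2 ∑ₖ rₖᵀ Ω rₖ` over its coordinate vectors `rₖ`, so it vanishes at `A ∘ p'`; a framework `q`
equivalent to `A ∘ p'` has the same energy since `ω` is supported on edges, and `Ω ⪰ 0` then
puts every coordinate vector of `q` into `ker Ω`. Since the edge directions of `p'` lie on no
conic at infinity, they span `ℝ^D`, so the affine functions of `p'` form a `(D + 1)`-dimensional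
subspace of `ker Ω`, which by the rank condition is all of it: `q = B ∘ p'` for an affine `B`.
Finally `A†A - B†B` (on the linear parts) is a symmetric form vanishing on all edge directions,
hence zero, so `A ∘ p'` and `B ∘ p'` are congruent.
-/

open Matrix

def IsEquilibriumStress {n : ℕ} {V : Type*} [AddCommGroup V] [Module ℝ V]
    (ω : Fin n → Fin n → ℝ) (r : Fin n → V) : Prop :=
  ∀ i, ∑ j, ω i j • (r i - r j) = 0

section Stress

variable {n : ℕ} {ω : Fin n → Fin n → ℝ}

theorem IsEquilibriumStress.map {V W : Type*} [AddCommGroup V] [Module ℝ V] [AddCommGroup W]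
    [Module ℝ W] {r : Fin n → V} (h : IsEquilibriumStress ω r) (A : V →ᵃ[ℝ] W) :
    IsEquilibriumStress ω (A ∘ r) := by
  intro i
  have hdiff : ∀ j, A (r i) - A (r j) = A.linear (r i - r j) := fun j =>
    (A.linearMap_vsub _ _).symm
  simp only [Function.comp_apply, hdiff, ← map_smul, ← map_sum, h i, map_zero]

theorem stressMatrix_eq_diagonal_sub (hii : ∀ i, ω i i = 0) :
    stressMatrix ω = diagonal (fun i => ∑ k, ω i k) - of ω := by
  ext i j
  by_cases h : i = j
  · subst h; simp [stressMatrix, hii]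
  · simp [stressMatrix, h]

theorem stressMatrix_mulVec_apply (hii : ∀ i, ω i i = 0) (x : Fin n → ℝ) (i : Fin n) :
    (stressMatrix ω *ᵥ x) i = ∑ j, ω i j * (x i - x j) := by
  rw [stressMatrix_eq_diagonal_sub hii, sub_mulVec, Pi.sub_apply, mulVec_diagonal]
  simp only [mulVec, dotProduct, of_apply, mul_sub, Finset.sum_sub_distrib, Finset.sum_mul]

theorem stressMatrix_mulVec_eq_zero_iff (hii : ∀ i, ω i i = 0) (x : Fin n → ℝ) :
    stressMatrix ω *ᵥ x = 0 ↔ IsEquilibriumStress ω x := by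
  simp only [funext_iff, stressMatrix_mulVec_apply hii, IsEquilibriumStress, smul_eq_mul,
    Pi.zero_apply]

theorem isEquilibriumStress_iff_stressMatrix_mulVec_coord (hii : ∀ i, ω i i = 0) {m : ℕ}
    (r : Fin n → EuclideanSpace ℝ (Fin m)) :
    IsEquilibriumStress ω r ↔ ∀ k, stressMatrix ω *ᵥ (fun i => r i k) = 0 := by
  simp only [stressMatrix_mulVec_eq_zero_iff hii, IsEquilibriumStress]
  constructor
  · intro h k i
    simpa using congr($(h i) k)
  · intro h i
    ext k
    simpa using h k i

theorem dotProduct_stressMatrix_mulVec_self (hsym : ∀ i j, ω i j = ω j i)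
    (hii : ∀ i, ω i i = 0) (x : Fin n → ℝ) :
    2 * (x ⬝ᵥ stressMatrix ω *ᵥ x) = ∑ i, ∑ j, ω i j * (x i - x j) ^ 2 := by
  have h₁ : x ⬝ᵥ stressMatrix ω *ᵥ x = ∑ i, ∑ j, ω i j * (x i - x j) * x i := by
    simp only [dotProduct, stressMatrix_mulVec_apply hii, Finset.mul_sum]
    exact Finset.sum_congr rfl fun i _ => Finset.sum_congr rfl fun j _ => by ring
  have h₂ : x ⬝ᵥ stressMatrix ω *ᵥ x = ∑ i, ∑ j, -(ω i j * (x i - x j) * x j) := by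
    rw [h₁, Finset.sum_comm]
    exact Finset.sum_congr rfl fun i _ => Finset.sum_congr rfl fun j _ => by rw [hsym]; ring
  rw [two_mul]
  nth_rewrite 1 [h₁]
  rw [h₂, ← Finset.sum_add_distrib]
  refine Finset.sum_congr rfl fun i _ => ?_
  rw [← Finset.sum_add_distrib]
  exact Finset.sum_congr rfl fun j _ => by ring

theorem sum_stress_mul_dist_sq (hsym : ∀ i j, ω i j = ω j i) (hii : ∀ i, ω i i = 0) {m : ℕ}
    (r : Fin n → EuclideanSpace ℝ (Fin m)) :
    ∑ i, ∑ j, ω i j * dist (r i) (r j) ^ 2 =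
      2 * ∑ k, (fun i => r i k) ⬝ᵥ stressMatrix ω *ᵥ (fun i => r i k) := by
  have hdist : ∀ x y : EuclideanSpace ℝ (Fin m), dist x y ^ 2 = ∑ k, (x k - y k) ^ 2 := by
    intro x y
    simp [EuclideanSpace.dist_eq, Real.sq_sqrt (Finset.sum_nonneg fun _ _ => sq_nonneg _),
      Real.dist_eq]
  simp only [Finset.mul_sum, dotProduct_stressMatrix_mulVec_self hsym hii, hdist]
  exact (Finset.sum_congr rfl fun _ _ => Finset.sum_comm).trans Finset.sum_comm

theorem IsEquilibriumStress.of_frameworkEquiv {G : SimpleGraph (Fin n)}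
    (hsym : ∀ i j, ω i j = ω j i) (hsupp : ∀ i j, ¬ G.Adj i j → ω i j = 0)
    (hpsd : (stressMatrix ω).PosSemidef) {d m : ℕ} {p : Fin n → EuclideanSpace ℝ (Fin d)}
    {q : Fin n → EuclideanSpace ℝ (Fin m)} (hp : IsEquilibriumStress ω p)
    (hpq : FrameworkEquiv G p q) : IsEquilibriumStress ω q := by
  have hii : ∀ i, ω i i = 0 := fun i => hsupp i i G.irrefl
  have henergy : ∑ i, ∑ j, ω i j * dist (q i) (q j) ^ 2 =
      ∑ i, ∑ j, ω i j * dist (p i) (p j) ^ 2 := by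
    refine Finset.sum_congr rfl fun i _ => Finset.sum_congr rfl fun j _ => ?_
    by_cases h : G.Adj i j
    · rw [hpq i j h]
    · rw [hsupp i j h, zero_mul, zero_mul]
  rw [sum_stress_mul_dist_sq hsym hii, sum_stress_mul_dist_sq hsym hii] at henergy
  simp only [(isEquilibriumStress_iff_stressMatrix_mulVec_coord hii p).1 hp, dotProduct_zero,
    Finset.sum_const_zero, mul_zero, mul_eq_zero, two_ne_zero, false_or] at henergy
  have hnonneg : ∀ x, 0 ≤ x ⬝ᵥ stressMatrix ω *ᵥ x := by
    simpa only [star_trivial] using hpsd.dotProduct_mulVec_nonneg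
  rw [isEquilibriumStress_iff_stressMatrix_mulVec_coord hii]
  intro k
  rw [← hpsd.dotProduct_mulVec_zero_iff, star_trivial]
  exact (Finset.sum_eq_zero_iff_of_nonneg fun k _ => hnonneg _).1 henergy k (Finset.mem_univ k)

end Stress

section Kernel

variable {n : ℕ} {V : Type*} [AddCommGroup V] [Module ℝ V]

def affineMapEval (p : Fin n → V) : (V →ᵃ[ℝ] ℝ) →ₗ[ℝ] (Fin n → ℝ) where
  toFun B i := B (p i)
  map_add' _ _ := rfl
  map_smul' _ _ := rfl

theorem affineMapEval_injective {p : Fin n → V} (hp : affineSpan ℝ (Set.range p) = ⊤) :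
    Function.Injective (affineMapEval p) := by
  rw [← LinearMap.ker_eq_bot, LinearMap.ker_eq_bot']
  intro B hB
  refine AffineMap.ext_on hp ?_
  rintro _ ⟨i, rfl⟩
  exact congr_fun hB i

theorem range_affineMapEval_eq_ker_stressMatrix [FiniteDimensional ℝ V]
    {ω : Fin n → Fin n → ℝ} {p : Fin n → V} (hii : ∀ i, ω i i = 0)
    (hp : IsEquilibriumStress ω p) (hspan : affineSpan ℝ (Set.range p) = ⊤)
    (hrank : (stressMatrix ω).rank = n - Module.finrank ℝ V - 1) :
    LinearMap.range (affineMapEval p) = LinearMap.ker (stressMatrix ω).mulVecLin := by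
  have hle : LinearMap.range (affineMapEval p) ≤ LinearMap.ker (stressMatrix ω).mulVecLin := by
    rintro _ ⟨B, rfl⟩
    exact (stressMatrix_mulVec_eq_zero_iff hii _).2 (hp.map B)
  have hrange : Module.finrank ℝ (LinearMap.range (affineMapEval p)) =
      Module.finrank ℝ V + 1 := by
    rw [LinearMap.finrank_range_of_inj (affineMapEval_injective hspan), AffineMap.finrank_eq,
      Module.finrank_self, mul_one]
  have hn : Module.finrank ℝ V + 1 ≤ n := by
    simpa [hrange] using Submodule.finrank_le (LinearMap.range (affineMapEval p))
  have hker := LinearMap.finrank_range_add_finrank_ker (stressMatrix ω).mulVecLin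
  rw [← Matrix.rank, hrank, Module.finrank_fin_fun] at hker
  exact Submodule.eq_of_le_of_finrank_le hle (by omega)

theorem IsEquilibriumStress.exists_affineMap_eq_comp {ω : Fin n → Fin n → ℝ} {p : Fin n → V}
    (hii : ∀ i, ω i i = 0)
    (hker : LinearMap.range (affineMapEval p) = LinearMap.ker (stressMatrix ω).mulVecLin)
    {m : ℕ} {q : Fin n → EuclideanSpace ℝ (Fin m)} (hq : IsEquilibriumStress ω q) :
    ∃ B : V →ᵃ[ℝ] EuclideanSpace ℝ (Fin m), q = B ∘ p := by
  have hcoord : ∀ k, ∃ B : V →ᵃ[ℝ] ℝ, affineMapEval p B = fun i => q i k := fun k => by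
    rw [← LinearMap.mem_range, hker, LinearMap.mem_ker, mulVecLin_apply]
    exact (isEquilibriumStress_iff_stressMatrix_mulVec_coord hii q).1 hq k
  choose B hB using hcoord
  refine ⟨(WithLp.linearEquiv 2 ℝ (Fin m → ℝ)).symm.toLinearMap.toAffineMap.comp
    (AffineMap.pi B), ?_⟩
  ext i k
  exact (congr_fun (hB k) i).symm

end Kernel

section Conic

variable {n D : ℕ} {G : SimpleGraph (Fin n)} {p : Fin n → EuclideanSpace ℝ (Fin D)}

theorem onConicAtInfinity_of_isSymmetric
    {S : EuclideanSpace ℝ (Fin D) →ₗ[ℝ] EuclideanSpace ℝ (Fin D)} (hS : S.IsSymmetric)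
    (hS0 : S ≠ 0) (hp : ∀ i j, G.Adj i j → inner ℝ (S (p i - p j)) (p i - p j) = 0) :
    OnConicAtInfinity G p := by
  obtain ⟨Q, rfl⟩ := Matrix.toEuclideanLin.surjective S
  refine ⟨Q, by simpa using hS0, ?_, fun i j hij => ?_⟩
  · rwa [← isHermitian_iff_isSymm, ← isSymmetric_toEuclideanLin_iff]
  · have := hp i j hij
    rw [EuclideanSpace.inner_eq_star_dotProduct, Matrix.ofLp_toLpLin, star_trivial,
      toLin'_apply] at this
    exact this

theorem vectorSpan_eq_top_of_not_onConicAtInfinity (h : ¬ OnConicAtInfinity G p) :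
    vectorSpan ℝ (Set.range p) = ⊤ := by
  by_contra hne
  obtain ⟨u, hu, hu0⟩ :=
    Submodule.exists_mem_ne_zero_of_ne_bot (Submodule.orthogonal_eq_bot_iff.not.2 hne)
  let S : EuclideanSpace ℝ (Fin D) →ₗ[ℝ] EuclideanSpace ℝ (Fin D) := (innerₛₗ ℝ u).smulRight u
  refine h (onConicAtInfinity_of_isSymmetric (S := S) ?_ ?_ fun i j _ => ?_)
  · intro v w
    simp only [S, LinearMap.smulRight_apply, innerₛₗ_apply_apply, real_inner_smul_right,
      real_inner_comm]
    ring
  · intro hS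
    have : S u = 0 := by rw [hS, LinearMap.zero_apply]
    simp [S, hu0] at this
  · have : inner ℝ u (p i - p j) = 0 := Submodule.inner_left_of_mem_orthogonal
      (vsub_mem_vectorSpan ℝ (Set.mem_range_self i) (Set.mem_range_self j)) hu
    simp [S, this]

theorem norm_eq_norm_of_not_onConicAtInfinity {F F' : Type*} [NormedAddCommGroup F]
    [InnerProductSpace ℝ F] [FiniteDimensional ℝ F] [NormedAddCommGroup F']
    [InnerProductSpace ℝ F'] [FiniteDimensional ℝ F'] (h : ¬ OnConicAtInfinity G p)
    (A : EuclideanSpace ℝ (Fin D) →ₗ[ℝ] F) (B : EuclideanSpace ℝ (Fin D) →ₗ[ℝ] F')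
    (hAB : ∀ i j, G.Adj i j → ‖A (p i - p j)‖ = ‖B (p i - p j)‖)
    (v : EuclideanSpace ℝ (Fin D)) : ‖A v‖ = ‖B v‖ := by
  let S := LinearMap.adjoint A ∘ₗ A - LinearMap.adjoint B ∘ₗ B
  have hS : ∀ v, inner ℝ (S v) v = ‖A v‖ ^ 2 - ‖B v‖ ^ 2 := fun v => by
    simp [S, inner_sub_left, LinearMap.adjoint_inner_left]
  have hS0 : S = 0 := by
    by_contra hne
    refine h (onConicAtInfinity_of_isSymmetric ?_ hne fun i j hij => ?_)
    · exact A.isSymmetric_adjoint_comp_self.sub B.isSymmetric_adjoint_comp_self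
    · rw [hS, hAB i j hij, sub_self]
  have := hS v
  rw [hS0, LinearMap.zero_apply, inner_zero_left, eq_comm, sub_eq_zero] at this
  exact (sq_eq_sq₀ (norm_nonneg _) (norm_nonneg _)).1 this

theorem frameworkCongruent_comp_of_not_onConicAtInfinity (h : ¬ OnConicAtInfinity G p)
    {d m : ℕ} (A : EuclideanSpace ℝ (Fin D) →ᵃ[ℝ] EuclideanSpace ℝ (Fin d))
    (B : EuclideanSpace ℝ (Fin D) →ᵃ[ℝ] EuclideanSpace ℝ (Fin m))
    (hAB : FrameworkEquiv G (A ∘ p) (B ∘ p)) : FrameworkCongruent (A ∘ p) (B ∘ p) := by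
  intro i j
  simp only [FrameworkEquiv, Function.comp_apply, dist_eq_norm, ← vsub_eq_sub,
    ← AffineMap.linearMap_vsub] at hAB ⊢
  exact norm_eq_norm_of_not_onConicAtInfinity h A.linear B.linear hAB _

end Conic

/-- If `(G, p)` in `ℝ^d` is the image under an affine map of a super stable framework
`(G, p')` in `ℝ^D`, then `(G, p)` is universally rigid. -/
theorem universallyRigid_of_affine_image_superStable {n d D : ℕ} (G : SimpleGraph (Fin n))
    (p' : Fin n → EuclideanSpace ℝ (Fin D)) (hss : SuperStable G p')
    (A : EuclideanSpace ℝ (Fin D) →ᵃ[ℝ] EuclideanSpace ℝ (Fin d))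
    (p : Fin n → EuclideanSpace ℝ (Fin d)) (hp : ∀ i, p i = A (p' i)) :
    UniversallyRigid G p := by
  obtain ⟨⟨ω, hsym, hsupp, heq, hpsd, hrank⟩, hconic⟩ := hss
  obtain rfl : p = A ∘ p' := funext hp
  intro D' _ q hpq
  rcases isEmpty_or_nonempty (Fin n) with _ | _
  · exact fun i => isEmptyElim i
  have hii : ∀ i, ω i i = 0 := fun i => hsupp i i G.irrefl
  have hspan : affineSpan ℝ (Set.range p') = ⊤ :=
    (AffineSubspace.affineSpan_eq_top_iff_vectorSpan_eq_top_of_nonempty ℝ _ _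
      (Set.range_nonempty p')).2 (vectorSpan_eq_top_of_not_onConicAtInfinity hconic)
  have hker := range_affineMapEval_eq_ker_stressMatrix hii heq hspan (by simpa using hrank)
  obtain ⟨B, rfl⟩ := IsEquilibriumStress.exists_affineMap_eq_comp hii hker
    ((IsEquilibriumStress.map heq A).of_frameworkEquiv hsym hsupp hpsd hpq)
  exact frameworkCongruent_comp_of_not_onConicAtInfinity hconic A B hpq
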